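/- Let f : ℝⁿ → ℝ be differentiable with L-Lipschitz gradient (L ≥ 0). Let M be an n×d real matrix and G an n×s real matrix with GᵀMMᵀG positive definite and λ_min(GᵀG) > 0. Fix x ∈ ℝⁿ, set λ := −(GᵀMMᵀG)⁻¹GᵀMMᵀ∇f(x), let ε₂ > 0 with min_i λ_i < −ε₂, and define d̄ ∈ ℝ^s by: d̄ = (1,…,1) if −∑_i λ_i ≥ ε₂/2, and otherwise d̄_i = 1 when λ_i ≤ 0 and d̄_i = (∑_{j:λ_j≤0}(−λ_j))/(2∑_{j:λ_j>0}λ_j) when λ_i > 0. Set d_k := −(ε₂·d/n)·MᵀG(GᵀMMᵀG)⁻¹d̄. Suppose ε ∈ (0,1), α ≥ 0, ‖M d_k‖² ≤ ((1+ε)/n)·‖d_k‖², and λ_min(GᵀMMᵀG) ≥ (d(1−ε)/n²)·λ_min(GᵀG). Then f(x + α·M d_k) − f(x) ≤ −α·(1 − (1+ε)·L·α·s/((1−ε)·λ_min(GᵀG)))·ε₂²·d/(2n). -/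

import Mathlib

open Matrix InnerProductSpace

/-- Apply a real matrix to a vector of the corresponding Euclidean space. -/
noncomputable def mulVecE {m n : Type*} [Fintype n] (A : Matrix m n ℝ)
    (v : EuclideanSpace ℝ n) : EuclideanSpace ℝ m :=
  (WithLp.equiv 2 (m → ℝ)).symm (A.mulVec ((WithLp.equiv 2 (n → ℝ)) v))

/-- `Z = I - MᵀG(GᵀMMᵀG)⁻¹GᵀM`. -/
noncomputable def Zmat {n d s : Type*} [Fintype n] [Fintype d] [DecidableEq d] [Fintype s]
    [DecidableEq s] (M : Matrix n d ℝ) (G : Matrix n s ℝ) : Matrix d d ℝ :=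
  1 - Mᵀ * G * (Gᵀ * M * Mᵀ * G)⁻¹ * Gᵀ * M

/-- `λ(v) = -(GᵀMMᵀG)⁻¹GᵀMMᵀv`. -/
noncomputable def lamVec {n d s : Type*} [Fintype n] [Fintype d] [Fintype s] [DecidableEq s]
    (M : Matrix n d ℝ) (G : Matrix n s ℝ) (v : EuclideanSpace ℝ n) : EuclideanSpace ℝ s :=
  -(mulVecE ((Gᵀ * M * Mᵀ * G)⁻¹ * Gᵀ * M * Mᵀ) v)

/-- Componentwise positive part `[a]₊`. -/
noncomputable def posPartE {s : Type*} (a : EuclideanSpace ℝ s) : EuclideanSpace ℝ s :=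
  (WithLp.equiv 2 (s → ℝ)).symm (fun i => max ((WithLp.equiv 2 (s → ℝ)) a i) 0)

/-- Smallest eigenvalue of a (symmetric) real matrix. -/
noncomputable def lambdaMin {s : Type*} [Fintype s] (A : Matrix s s ℝ) : ℝ :=
  sInf {r : ℝ | ∃ v : s → ℝ, v ≠ 0 ∧ A.mulVec v = r • v}

/-! ### Auxiliary lemmas -/

lemma descent_lemma {n : ℕ} (f : EuclideanSpace ℝ (Fin n) → ℝ) (L : ℝ) (hL : 0 ≤ L)
    (hdiff : Differentiable ℝ f)
    (hlip : ∀ x y, ‖gradient f x - gradient f y‖ ≤ L * ‖x - y‖)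
    (x v : EuclideanSpace ℝ (Fin n)) :
    f (x + v) ≤ f x + ⟪gradient f x, v⟫_ℝ + L / 2 * ‖v‖ ^ 2 := by
  set g := gradient f with hg
  have hasd : ∀ t : ℝ, HasDerivAt (fun t : ℝ => f (x + t • v)) ⟪g (x + t • v), v⟫_ℝ t := by
    intro t
    have h1 : HasDerivAt (fun t : ℝ => x + t • v) v t := by
      simpa using ((hasDerivAt_id t).smul_const v).const_add x
    have h2 := ((hdiff (x + t • v)).hasFDerivAt).comp_hasDerivAt t h1
    have h3 : fderiv ℝ f (x + t • v) v = ⟪g (x + t • v), v⟫_ℝ := by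
      rw [hg, gradient]
      rw [toDual_symm_apply]
    rw [h3] at h2
    exact h2
  have hgcont : Continuous g := by
    have : LipschitzWith L.toNNReal g := by
      apply LipschitzWith.of_dist_le_mul
      intro a b
      simpa [dist_eq_norm, Real.coe_toNNReal L hL] using hlip a b
    exact this.continuous
  have hDcont : Continuous fun t : ℝ => ⟪g (x + t • v), v⟫_ℝ := by
    exact (hgcont.comp (by continuity)).inner continuous_const
  have key : f (x + v) - f x = ∫ t in (0:ℝ)..1, ⟪g (x + t • v), v⟫_ℝ := by
    have := intervalIntegral.integral_eq_sub_of_hasDerivAt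
      (f := fun t : ℝ => f (x + t • v)) (a := (0:ℝ)) (b := 1)
      (fun t _ => hasd t) (hDcont.intervalIntegrable 0 1)
    simpa using this.symm
  have bound : (∫ t in (0:ℝ)..1, ⟪g (x + t • v), v⟫_ℝ)
      ≤ ∫ t in (0:ℝ)..1, (⟪g x, v⟫_ℝ + L * ‖v‖ ^ 2 * t) := by
    apply intervalIntegral.integral_mono_on (by norm_num)
      (hDcont.intervalIntegrable 0 1)
      ((Continuous.intervalIntegrable (by fun_prop : Continuous fun t : ℝ => ⟪g x, v⟫_ℝ + L * ‖v‖ ^ 2 * t)) 0 1)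
    intro t ht
    rcases ht with ⟨ht0, ht1⟩
    have h1 : ⟪g (x + t • v), v⟫_ℝ - ⟪g x, v⟫_ℝ = ⟪g (x + t • v) - g x, v⟫_ℝ := by
      rw [inner_sub_left]
    have h2 : ⟪g (x + t • v) - g x, v⟫_ℝ ≤ ‖g (x + t • v) - g x‖ * ‖v‖ :=
      real_inner_le_norm _ _
    have h3 : ‖g (x + t • v) - g x‖ ≤ L * (t * ‖v‖) := by
      have := hlip (x + t • v) x
      simpa [norm_smul, abs_of_nonneg ht0] using this
    nlinarith [norm_nonneg v, mul_le_mul_of_nonneg_right h3 (norm_nonneg v)]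
  have rhs : (∫ t in (0:ℝ)..1, (⟪g x, v⟫_ℝ + L * ‖v‖ ^ 2 * t))
      = ⟪g x, v⟫_ℝ + L / 2 * ‖v‖ ^ 2 := by
    rw [intervalIntegral.integral_add (intervalIntegrable_const)
      ((Continuous.intervalIntegrable (by fun_prop : Continuous fun t : ℝ => L * ‖v‖ ^ 2 * t)) 0 1),
      intervalIntegral.integral_const_mul, integral_id]
    simp
    ring
  linarith [key, bound, rhs.le, rhs.ge]

lemma mulVecE_comp {k m p : ℕ} (A : Matrix (Fin k) (Fin m) ℝ) (B : Matrix (Fin m) (Fin p) ℝ)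
    (v : EuclideanSpace ℝ (Fin p)) : mulVecE A (mulVecE B v) = mulVecE (A * B) v := by
  simp [mulVecE, Matrix.mulVec_mulVec]

lemma mulVecE_one {k : ℕ} (v : EuclideanSpace ℝ (Fin k)) :
    mulVecE (1 : Matrix (Fin k) (Fin k) ℝ) v = v := by
  simp [mulVecE]

lemma innerE {k : ℕ} (a b : EuclideanSpace ℝ (Fin k)) :
    ⟪a, b⟫_ℝ = (WithLp.equiv 2 (Fin k → ℝ) a) ⬝ᵥ (WithLp.equiv 2 (Fin k → ℝ) b) := by
  simp [PiLp.inner_apply, dotProduct, RCLike.inner_apply, mul_comm]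

lemma transpose_innerE {k m : ℕ} (A : Matrix (Fin k) (Fin m) ℝ)
    (u : EuclideanSpace ℝ (Fin m)) (w : EuclideanSpace ℝ (Fin k)) :
    ⟪mulVecE A u, w⟫_ℝ = ⟪u, mulVecE Aᵀ w⟫_ℝ := by
  simp only [innerE, mulVecE, Equiv.apply_symm_apply]
  rw [dotProduct_comm, Matrix.dotProduct_mulVec, dotProduct_comm,
    ← Matrix.mulVec_transpose]

lemma quadForm {k : ℕ} (A : Matrix (Fin k) (Fin k) ℝ) (hA : A.PosDef)
    (w : EuclideanSpace ℝ (Fin k)) :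
    lambdaMin A * ⟪mulVecE A w, w⟫_ℝ ≤ ‖mulVecE A w‖ ^ 2 := by
  have hH : A.IsHermitian := hA.1
  set b := hH.eigenvectorBasis with hbdef
  set μ := hH.eigenvalues with hμdef
  have hb : ∀ i, mulVecE A (b i) = μ i • (b i) := by
    intro i
    have h := hH.mulVec_eigenvectorBasis i
    simp only [mulVecE, WithLp.equiv_apply, WithLp.equiv_symm_apply]
    rw [h]
    rfl
  have hμpos : ∀ i, 0 < μ i := fun i => hA.eigenvalues_pos i
  have hle : ∀ i, lambdaMin A ≤ μ i := by
    intro i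
    apply csInf_le
    · refine ⟨0, ?_⟩
      rintro r ⟨v, hv, hAv⟩
      have h2 := hA.dotProduct_mulVec_pos hv
      rw [hAv] at h2
      have hvv : 0 < dotProduct v v := by
        rcases lt_or_eq_of_le (Finset.sum_nonneg fun i _ => mul_self_nonneg (v i) :
          (0:ℝ) ≤ dotProduct v v) with h | h
        · exact h
        · exact absurd (dotProduct_self_eq_zero.mp h.symm) hv
      have heq : dotProduct (star v) (r • v) = r * dotProduct v v := by
        simp [dotProduct_smul, star_trivial, smul_eq_mul, dotProduct, Finset.mul_sum]
        exact Finset.sum_congr rfl fun i _ => by ring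
      rw [heq] at h2
      nlinarith
    · exact ⟨⇑(b i), hH.eigenvectorBasis.orthonormal.ne_zero i ∘ (by
        intro h; ext j; exact congrFun h j), by
        rw [hH.mulVec_eigenvectorBasis i]⟩
  set u := mulVecE A w with hu
  have hub : ∀ i, ⟪u, b i⟫_ℝ = μ i * ⟪b i, w⟫_ℝ := by
    intro i
    rw [hu, transpose_innerE]
    have hAT : Aᵀ = A := by
      rw [← Matrix.conjTranspose_eq_transpose_of_trivial, hH.eq]
    rw [hAT, real_inner_comm, hb i, inner_smul_left]
    simp [real_inner_comm]
  have huw : ⟪u, w⟫_ℝ = ∑ i, μ i * ⟪b i, w⟫_ℝ * ⟪b i, w⟫_ℝ := by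
    rw [← b.sum_inner_mul_inner u w]
    exact Finset.sum_congr rfl fun i _ => by rw [hub i]
  have hbu : ∀ i, ⟪b i, u⟫_ℝ = μ i * ⟪b i, w⟫_ℝ := by
    intro i; rw [real_inner_comm]; exact hub i
  have huu : ‖u‖ ^ 2 = ∑ i, (μ i * ⟪b i, w⟫_ℝ) * (μ i * ⟪b i, w⟫_ℝ) := by
    rw [← real_inner_self_eq_norm_sq, ← b.sum_inner_mul_inner u u]
    refine Finset.sum_congr rfl fun i _ => ?_
    rw [hub i, hbu i]
  rw [huw, huu, Finset.mul_sum]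
  apply Finset.sum_le_sum
  intro i _
  have h1 := hle i
  have h2 := hμpos i
  nlinarith [sq_nonneg (⟪b i, w⟫_ℝ)]

lemma dbar_facts {s : ℕ} (l : Fin s → ℝ) (ε₂ : ℝ) (hε₂ : 0 < ε₂) (hmin : ∃ i, l i < -ε₂)
    (db : Fin s → ℝ)
    (hdb : db = if ε₂ / 2 ≤ -(∑ i, l i) then (fun _ => 1)
      else (fun i => if l i ≤ 0 then 1
        else (∑ j ∈ Finset.univ.filter (fun j => l j ≤ 0), -l j) /
          (2 * ∑ j ∈ Finset.univ.filter (fun j => 0 < l j), l j))) :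
    (∀ i, 0 ≤ db i ∧ db i ≤ 1) ∧ ∑ i, l i * db i ≤ -(ε₂ / 2) := by
  obtain ⟨i₀, hi₀⟩ := hmin
  by_cases hc : ε₂ / 2 ≤ -(∑ i, l i)
  · rw [if_pos hc] at hdb
    subst hdb
    refine ⟨fun i => by norm_num, ?_⟩
    simp only [mul_one]
    linarith
  · rw [if_neg hc] at hdb
    push_neg at hc
    set Sm := ∑ j ∈ Finset.univ.filter (fun j => l j ≤ 0), -l j with hSm
    set Sp := ∑ j ∈ Finset.univ.filter (fun j => 0 < l j), l j with hSp
    have hSmge : ε₂ ≤ Sm := by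
      have hmem : i₀ ∈ Finset.univ.filter (fun j => l j ≤ 0) := by
        simp only [Finset.mem_filter, Finset.mem_univ, true_and]
        linarith
      have h := Finset.single_le_sum (f := fun j => -l j)
        (fun j hj => by
          simp only [Finset.mem_filter, Finset.mem_univ, true_and] at hj
          linarith) hmem
      linarith
    have hsplit : ∑ i, l i = -Sm + Sp := by
      rw [← Finset.sum_filter_add_sum_filter_not Finset.univ (fun j => l j ≤ 0) l]
      congr 1
      · rw [hSm, ← Finset.sum_neg_distrib]; simp
      · rw [hSp]
        apply Finset.sum_congr _ (fun _ _ => rfl)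
        ext j
        simp [not_le]
    have hSp2 : Sm / 2 < Sp := by linarith
    have hSppos : 0 < Sp := by linarith
    have hSp0 : Sp ≠ 0 := ne_of_gt hSppos
    have hr0 : 0 ≤ Sm / (2 * Sp) := div_nonneg (by linarith) (by linarith)
    have hr1 : Sm / (2 * Sp) ≤ 1 := by
      rw [div_le_one (by linarith)]
      linarith
    constructor
    · intro i
      subst hdb
      by_cases hli : l i ≤ 0 <;> simp [hli, hr0, hr1]
    · have hsum : ∑ i, l i * db i = -Sm + (Sm / (2 * Sp)) * Sp := by
        rw [← Finset.sum_filter_add_sum_filter_not Finset.univ (fun j => l j ≤ 0)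
          (fun i => l i * db i)]
        congr 1
        · rw [show -Sm = ∑ j ∈ Finset.univ.filter (fun j => l j ≤ 0), l j by
            rw [hSm, ← Finset.sum_neg_distrib]; simp]
          apply Finset.sum_congr rfl
          intro j hj
          simp only [Finset.mem_filter] at hj
          rw [hdb]
          simp [hj.2]
        · rw [show (Sm / (2 * Sp)) * Sp = ∑ j ∈ Finset.univ.filter (fun j => ¬ l j ≤ 0),
            l j * (Sm / (2 * Sp)) by
              rw [← Finset.sum_mul]
              rw [show ∑ j ∈ Finset.univ.filter (fun j => ¬ l j ≤ 0), l j = Sp by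
                rw [hSp]; apply Finset.sum_congr _ (fun _ _ => rfl); ext j; simp [not_le]]
              ring]
          apply Finset.sum_congr rfl
          intro j hj
          simp only [Finset.mem_filter] at hj
          rw [hdb]
          simp [hj.2]
      rw [hsum]
      have : (Sm / (2 * Sp)) * Sp = Sm / 2 := by
        field_simp
      rw [this]
      linarith

set_option maxHeartbeats 1000000 in
theorem stmt18 {n d s : ℕ} (hn : 0 < n) (hd : 0 < d) (hs : 0 < s)
    (f : EuclideanSpace ℝ (Fin n) → ℝ) (L : ℝ) (hL : 0 ≤ L)
    (hdiff : Differentiable ℝ f)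
    (hlip : ∀ x y, ‖gradient f x - gradient f y‖ ≤ L * ‖x - y‖)
    (M : Matrix (Fin n) (Fin d) ℝ) (G : Matrix (Fin n) (Fin s) ℝ)
    (hpd : (Gᵀ * M * Mᵀ * G).PosDef)
    (hGG : 0 < lambdaMin (Gᵀ * G))
    (x : EuclideanSpace ℝ (Fin n)) (l : Fin s → ℝ)
    (hl : l = (WithLp.equiv 2 (Fin s → ℝ)) (lamVec M G (gradient f x)))
    (ε₂ : ℝ) (hε₂ : 0 < ε₂) (hmin : ∃ i, l i < -ε₂)
    (dbar : EuclideanSpace ℝ (Fin s))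
    (hdbar : dbar = if ε₂ / 2 ≤ -(∑ i, l i)
        then (WithLp.equiv 2 (Fin s → ℝ)).symm (fun _ => 1)
        else (WithLp.equiv 2 (Fin s → ℝ)).symm (fun i =>
          if l i ≤ 0 then 1
          else (∑ j ∈ Finset.univ.filter (fun j => l j ≤ 0), -l j) /
            (2 * ∑ j ∈ Finset.univ.filter (fun j => 0 < l j), l j)))
    (dk : EuclideanSpace ℝ (Fin d))
    (hdk : dk = -((ε₂ * d / n) • mulVecE (Mᵀ * G * (Gᵀ * M * Mᵀ * G)⁻¹) dbar))
    (ε α : ℝ) (hε0 : 0 < ε) (hε1 : ε < 1) (hα : 0 ≤ α)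
    (hMdk : ‖mulVecE M dk‖ ^ 2 ≤ ((1 + ε) / n) * ‖dk‖ ^ 2)
    (heig : ((d : ℝ) * (1 - ε) / n ^ 2) * lambdaMin (Gᵀ * G)
        ≤ lambdaMin (Gᵀ * M * Mᵀ * G)) :
    f (x + α • mulVecE M dk) - f x
      ≤ -(α * (1 - (1 + ε) * L * α * s / ((1 - ε) * lambdaMin (Gᵀ * G)))
          * ε₂ ^ 2 * d / (2 * n)) := by
  -- basic positivity
  have hn' : (0:ℝ) < n := Nat.cast_pos.mpr hn
  have hd' : (0:ℝ) < d := Nat.cast_pos.mpr hd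
  have hs' : (0:ℝ) < s := Nat.cast_pos.mpr hs
  have h1ε : (0:ℝ) < 1 - ε := by linarith
  set A := Gᵀ * M * Mᵀ * G with hA
  set K := lambdaMin (Gᵀ * G) with hK
  set lA := lambdaMin A with hlA
  set c := ε₂ * d / n with hc
  have hc0 : 0 < c := by positivity
  -- matrix identities
  have hdet : IsUnit A.det := hpd.det_pos.ne'.isUnit
  have hAleft : A⁻¹ * A = 1 := Matrix.nonsing_inv_mul A hdet
  have hAright : A * A⁻¹ = 1 := Matrix.mul_nonsing_inv A hdet
  have hAT : Aᵀ = A := by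
    rw [← Matrix.conjTranspose_eq_transpose_of_trivial, hpd.1.eq]
  have hAinvT : A⁻¹ᵀ = A⁻¹ := by rw [Matrix.transpose_nonsing_inv, hAT]
  have h3 : (M * (Mᵀ * G * A⁻¹))ᵀ = A⁻¹ * Gᵀ * M * Mᵀ := by
    simp [Matrix.transpose_mul, hAinvT, Matrix.mul_assoc]
  have h4 : (Mᵀ * G * A⁻¹)ᵀ * (Mᵀ * G * A⁻¹) = A⁻¹ := by
    simp only [Matrix.transpose_mul, hAinvT, Matrix.transpose_transpose, Matrix.mul_assoc]
    rw [show Gᵀ * (M * (Mᵀ * (G * A⁻¹))) = A * A⁻¹ by rw [hA]; simp [Matrix.mul_assoc]]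
    rw [hAright, Matrix.mul_one]
  -- coordinate vectors
  set g' := (WithLp.equiv 2 (Fin n → ℝ)) (gradient f x) with hg'
  set db' := (WithLp.equiv 2 (Fin s → ℝ)) dbar with hdb'
  -- scalar facts about dbar
  have hdbfun : db' = (if ε₂ / 2 ≤ -(∑ i, l i) then (fun _ => (1:ℝ))
      else (fun i => if l i ≤ 0 then 1
        else (∑ j ∈ Finset.univ.filter (fun j => l j ≤ 0), -l j) /
          (2 * ∑ j ∈ Finset.univ.filter (fun j => 0 < l j), l j))) := by
    rw [hdb', hdbar]
    split_ifs <;> rfl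
  obtain ⟨hb01, hsumle⟩ := dbar_facts l ε₂ hε₂ hmin db' hdbfun
  -- l in coordinates
  have hl' : l = -((A⁻¹ * Gᵀ * M * Mᵀ) *ᵥ g') := by
    rw [hl]
    funext i
    simp only [lamVec, mulVecE, WithLp.equiv_apply, WithLp.equiv_symm_apply, WithLp.ofLp_neg, WithLp.ofLp_smul, PiLp.toLp_apply,
      PiLp.neg_apply, Pi.neg_apply, hA]
    rfl
  -- dk in coordinates
  have hdk' : (WithLp.equiv 2 (Fin d → ℝ)) dk = -(c • ((Mᵀ * G * A⁻¹) *ᵥ db')) := by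
    rw [hdk]
    funext i
    simp only [mulVecE, WithLp.equiv_apply, WithLp.equiv_symm_apply, WithLp.ofLp_neg, WithLp.ofLp_smul, PiLp.toLp_apply,
      PiLp.neg_apply, PiLp.smul_apply, Pi.neg_apply, Pi.smul_apply, smul_eq_mul, hdb']
  -- inner product computation
  have key1 : ⟪gradient f x, mulVecE M dk⟫_ℝ = c * (l ⬝ᵥ db') := by
    rw [innerE, mulVecE, Equiv.apply_symm_apply, hdk']
    rw [Matrix.mulVec_neg, Matrix.mulVec_smul, Matrix.mulVec_mulVec]
    rw [dotProduct_neg, dotProduct_smul, smul_eq_mul]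
    rw [Matrix.dotProduct_mulVec, ← Matrix.mulVec_transpose, h3, hl']
    rw [neg_dotProduct]
    ring
  -- norm of dk
  set Q := db' ⬝ᵥ (A⁻¹ *ᵥ db') with hQ
  have key2 : ‖dk‖ ^ 2 = c ^ 2 * Q := by
    rw [← real_inner_self_eq_norm_sq, innerE, hdk']
    rw [neg_dotProduct, dotProduct_neg, neg_neg,
      smul_dotProduct, dotProduct_smul, smul_eq_mul, smul_eq_mul]
    rw [Matrix.dotProduct_mulVec ((Mᵀ * G * A⁻¹) *ᵥ db'), ← Matrix.mulVec_transpose,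
      Matrix.mulVec_mulVec, h4]
    rw [hQ, dotProduct_comm]
    ring
  -- quadratic form bound
  have hlApos : 0 < lA := lt_of_lt_of_le (by positivity) heig
  have key3 : lA * Q ≤ (s:ℝ) := by
    set w₀ := mulVecE A⁻¹ dbar with hw₀
    have hAw₀ : mulVecE A w₀ = dbar := by
      rw [hw₀, mulVecE_comp, hAright, mulVecE_one]
    have hq := quadForm A hpd w₀
    rw [hAw₀] at hq
    have hinner : ⟪dbar, w₀⟫_ℝ = Q := by
      rw [innerE, hw₀, mulVecE, Equiv.apply_symm_apply]
    have hnorm : ‖dbar‖ ^ 2 ≤ (s:ℝ) := by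
      rw [← real_inner_self_eq_norm_sq, innerE]
      calc (WithLp.equiv 2 (Fin s → ℝ) dbar) ⬝ᵥ (WithLp.equiv 2 (Fin s → ℝ) dbar)
          = ∑ i, db' i * db' i := rfl
        _ ≤ ∑ _i : Fin s, (1:ℝ) := by
            apply Finset.sum_le_sum
            intro i _
            have := hb01 i
            nlinarith [this.1, this.2]
        _ = (s:ℝ) := by simp
    calc lA * Q = lA * ⟪dbar, w₀⟫_ℝ := by rw [hinner]
      _ ≤ ‖dbar‖ ^ 2 := hq
      _ ≤ (s:ℝ) := hnorm
  have hQ0 : 0 ≤ Q := by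
    by_contra h
    push_neg at h
    nlinarith [sq_nonneg ‖dk‖, key2, mul_pos hc0 hc0]
  -- assemble
  set u := mulVecE M dk with huu
  have hdesc := descent_lemma f L hL hdiff hlip x (α • u)
  have hinner_smul : ⟪gradient f x, α • u⟫_ℝ = α * (c * (l ⬝ᵥ db')) := by
    rw [real_inner_smul_right, key1]
  have hnorm_smul : ‖α • u‖ ^ 2 = α ^ 2 * ‖u‖ ^ 2 := by
    rw [norm_smul, mul_pow, Real.norm_eq_abs, sq_abs]
  have hQbound : Q ≤ (s:ℝ) * n ^ 2 / (d * (1 - ε) * K) := by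
    rw [le_div_iff₀ (by positivity)]
    have h5 : Q * ((d:ℝ) * (1 - ε) / n ^ 2 * K) ≤ Q * lA :=
      mul_le_mul_of_nonneg_left heig hQ0
    have h6 : Q * lA ≤ (s:ℝ) := by rw [mul_comm]; exact key3
    have h7 : Q * ((d:ℝ) * (1 - ε) * K) = (Q * ((d:ℝ) * (1 - ε) / n ^ 2 * K)) * n ^ 2 := by
      field_simp
    rw [h7]
    calc (Q * ((d:ℝ) * (1 - ε) / n ^ 2 * K)) * n ^ 2 ≤ (Q * lA) * n ^ 2 := by nlinarith
      _ ≤ (s:ℝ) * n ^ 2 := by nlinarith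
  have hu2 : ‖u‖ ^ 2 ≤ (1 + ε) / n * (c ^ 2 * ((s:ℝ) * n ^ 2 / (d * (1 - ε) * K))) := by
    calc ‖u‖ ^ 2 ≤ (1 + ε) / n * ‖dk‖ ^ 2 := hMdk
      _ = (1 + ε) / n * (c ^ 2 * Q) := by rw [key2]
      _ ≤ (1 + ε) / n * (c ^ 2 * ((s:ℝ) * n ^ 2 / (d * (1 - ε) * K))) := by
          apply mul_le_mul_of_nonneg_left _ (by positivity)
          exact mul_le_mul_of_nonneg_left hQbound (by positivity)
  have hT1 : α * (c * (l ⬝ᵥ db')) ≤ α * (c * (-(ε₂ / 2))) := by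
    apply mul_le_mul_of_nonneg_left _ hα
    exact mul_le_mul_of_nonneg_left hsumle (le_of_lt hc0)
  have hT2 : L / 2 * ‖α • u‖ ^ 2
      ≤ L / 2 * (α ^ 2 * ((1 + ε) / n * (c ^ 2 * ((s:ℝ) * n ^ 2 / (d * (1 - ε) * K))))) := by
    rw [hnorm_smul]
    apply mul_le_mul_of_nonneg_left _ (by positivity)
    exact mul_le_mul_of_nonneg_left hu2 (by positivity)
  have hfinal : α * (c * (-(ε₂ / 2)))
      + L / 2 * (α ^ 2 * ((1 + ε) / n * (c ^ 2 * ((s:ℝ) * n ^ 2 / (d * (1 - ε) * K)))))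
      = -(α * (1 - (1 + ε) * L * α * s / ((1 - ε) * K)) * ε₂ ^ 2 * d / (2 * n)) := by
    rw [hc]
    field_simp
    ring
  linarith [hdesc, hinner_smul.le, hinner_smul.ge, hT1, hT2, hfinal.le, hfinal.ge]
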